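/- With the twisted-like generators 𝕃 = -ε_{ABC}V^C Z_⊥^A ∂_⊥^B and ℙ^A = Z_⊥^A - (N_⊥ + Δ(N_∥))∂_⊥^A, the operators 𝕃 and ℙ^A commute with N_∥, 𝕃 commutes with □_⊥ - 1, and [ℙ^A, □_⊥ - 1] = 2 ∂_⊥^A (□_⊥ - 1). Consequently the kernel of □_⊥ - 1 intersected with an eigenspace of N_∥ is invariant under 𝕃 and all ℙ^A. -/

import Mathlib

noncomputable section

open MvPolynomial

-- Polynomials in the commuting variables `Z^0, Z^1, Z^2`.
abbrev P3 := MvPolynomial (Fin 3) ℝ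

/-- The metric `η = diag(-1, 1, 1)` (equal to its own inverse). -/
def eta : Fin 3 → ℝ := ![-1, 1, 1]

/-- The Levi-Civita symbol `ε_{ABC}` with `ε_{012} = 1`. -/
def eps (A B C : Fin 3) : ℝ :=
  (((A : ℕ) : ℝ) - ((B : ℕ) : ℝ)) * (((B : ℕ) : ℝ) - ((C : ℕ) : ℝ)) *
    (((C : ℕ) : ℝ) - ((A : ℕ) : ℝ)) / 2

/-- The partial derivative `∂/∂Z^A`. -/
def Dop (A : Fin 3) : P3 →ₗ[ℝ] P3 := (pderiv A).toLinearMap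

/-- The polynomial `Z·V = η_{AB} Z^A V^B`. -/
def ZdotV (V : Fin 3 → ℝ) : P3 := ∑ A : Fin 3, C (eta A * V A) * X A

/-- The transverse variable `Z_⊥^A = Z^A - (Z·V) V^A`. -/
def Zperp (V : Fin 3 → ℝ) (A : Fin 3) : P3 := X A - C (V A) * ZdotV V

/-- The parallel variable `Z_∥^A = (Z·V) V^A`. -/
def Zpar (V : Fin 3 → ℝ) (A : Fin 3) : P3 := C (V A) * ZdotV V

/-- The operator `V·∂ = V^A ∂/∂Z^A`. -/
def VdotD (V : Fin 3 → ℝ) : P3 →ₗ[ℝ] P3 := ∑ A : Fin 3, V A • Dop A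

/-- The transverse derivative `∂_⊥^A = ∂/∂Z_A - V^A (V·∂)` (with `∂/∂Z_A = η^{AB} ∂_B`). -/
def Dperp (V : Fin 3 → ℝ) (A : Fin 3) : P3 →ₗ[ℝ] P3 := eta A • Dop A - V A • VdotD V

/-- The parallel derivative `∂_∥^A = V^A (V·∂)`. -/
def Dpar (V : Fin 3 → ℝ) (A : Fin 3) : P3 →ₗ[ℝ] P3 := V A • VdotD V

/-- The transverse counting operator `N_⊥ = Z_⊥·∂_⊥ = η_{AB} Z_⊥^A ∂_⊥^B`. -/
def Nperp (V : Fin 3 → ℝ) : P3 →ₗ[ℝ] P3 :=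
  ∑ A : Fin 3, eta A • (LinearMap.mulLeft ℝ (Zperp V A) ∘ₗ Dperp V A)

/-- The parallel counting operator `N_∥ = Z_∥·∂_∥`. -/
def Npar (V : Fin 3 → ℝ) : P3 →ₗ[ℝ] P3 :=
  ∑ A : Fin 3, eta A • (LinearMap.mulLeft ℝ (Zpar V A) ∘ₗ Dpar V A)

/-- The twisted-like Lorentz generator `𝕃 = -ε_{ABC} V^C Z_⊥^A ∂_⊥^B`. -/
def Lgen (V : Fin 3 → ℝ) : P3 →ₗ[ℝ] P3 :=
  -∑ A : Fin 3, ∑ B : Fin 3, ∑ C : Fin 3,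
    (eps A B C * V C) • (LinearMap.mulLeft ℝ (Zperp V A) ∘ₗ Dperp V B)

/-- The twisted-like transvection `ℙ^A = Z_⊥^A - (N_⊥ + Δ(N_∥)) ∂_⊥^A`, where `Δ` is an
arbitrary polynomial evaluated at the operator `N_∥`. -/
def Pgen (V : Fin 3 → ℝ) (Δ : Polynomial ℝ) (A : Fin 3) : P3 →ₗ[ℝ] P3 :=
  LinearMap.mulLeft ℝ (Zperp V A) -
    ((Nperp V + Polynomial.aeval (Npar V : Module.End ℝ P3) Δ) ∘ₗ Dperp V A)


/-- The transverse trace operator `□_⊥ = ∂_⊥·∂_⊥ = η_{AB} ∂_⊥^A ∂_⊥^B`. -/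
def Boxperp (V : Fin 3 → ℝ) : P3 →ₗ[ℝ] P3 :=
  ∑ A : Fin 3, eta A • (Dperp V A ∘ₗ Dperp V A)

/-!
Write `∂_⊥^A = π^{AB} ∂_B` with the transverse projector `π^{AB} = η^{AB} - V^A V^B`, and
`V·∂ = V^B ∂_B`. These are constant-coefficient derivations, so they all commute. Since
`V·V = 1`, `∂_⊥` kills `Z·V` and `V·∂` kills `Z_⊥`; hence `N_∥ = (Z·V)(V·∂)` commutes with
every `Z_⊥^A` and `∂_⊥^B`, so with `N_⊥`, `□_⊥`, `𝕃`, `ℙ^A` and every polynomial in `N_∥`.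
From `∂_⊥^A Z_⊥^B = π^{AB}` and `π η π = π` one gets `[□_⊥, Z_⊥^A] = 2 ∂_⊥^A`, hence
`[□_⊥, Z_⊥^A ∂_⊥^B] = 2 ∂_⊥^A ∂_⊥^B`; summed against `η_{AB}` this gives `[□_⊥, N_⊥] = 2 □_⊥`,
and summed against the antisymmetric `ε_{ABC} V^C` it gives `[□_⊥, 𝕃] = 0`. Inserting these
into `ℙ^A = Z_⊥^A - (N_⊥ + Δ(N_∥)) ∂_⊥^A` yields `[ℙ^A, □_⊥ - 1] = 2 ∂_⊥^A (□_⊥ - 1)`, and an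
operator whose commutator with `T` is a left multiple of `T` preserves `ker T`.
-/

namespace MvPolynomial

variable {σ R : Type*} [CommRing R]

theorem derivation_commute_of_X_eq_C {D₁ D₂ : Derivation R (MvPolynomial σ R) (MvPolynomial σ R)}
    {a b : σ → R} (h₁ : ∀ i, D₁ (X i) = C (a i)) (h₂ : ∀ i, D₂ (X i) = C (b i)) :
    Commute (D₁ : Module.End R (MvPolynomial σ R)) D₂ := by
  have h : ⁅D₁, D₂⁆ = 0 := derivation_ext fun i => by
    simp [Derivation.commutator_apply, h₁, h₂, derivation_C]
  rw [commute_iff_lie_eq, ← Derivation.commutator_coe_linear_map, h]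
  rfl

variable [Fintype σ]

def dirDeriv : (σ → R) →ₗ[R] Derivation R (MvPolynomial σ R) (MvPolynomial σ R) :=
  Fintype.linearCombination R pderiv

theorem dirDeriv_apply (v : σ → R) (p : MvPolynomial σ R) :
    dirDeriv v p = ∑ i, v i • pderiv i p := by
  change Derivation.coeFnAddMonoidHom (∑ i, v i • pderiv i) p = _
  simp [map_sum]

theorem dirDeriv_X (v : σ → R) (i : σ) : dirDeriv v (X i) = C (v i) := by
  classical
  simp [dirDeriv_apply, pderiv_X, Pi.single_apply, C_eq_smul_one]

theorem commute_dirDeriv (v w : σ → R) :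
    Commute (dirDeriv v : Module.End R (MvPolynomial σ R)) (dirDeriv w) :=
  derivation_commute_of_X_eq_C (dirDeriv_X v) (dirDeriv_X w)

end MvPolynomial

theorem Finset.sum_sum_eq_zero_of_antisymm {ι K M : Type*} [Fintype ι] [DivisionRing K]
    [CharZero K] [AddCommGroup M] [Module K M] {g : ι → ι → M} (hg : ∀ i j, g j i = -g i j) :
    ∑ i, ∑ j, g i j = 0 := by
  have h : ∑ i, ∑ j, g i j = -∑ i, ∑ j, g i j := by
    conv_lhs => rw [Finset.sum_comm]
    simp only [← Finset.sum_neg_distrib]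
    exact Finset.sum_congr rfl fun j _ => Finset.sum_congr rfl fun i _ => hg j i
  have h2 : (2 : K) • ∑ i, ∑ j, g i j = 0 := by
    rw [two_smul]
    nth_rewrite 2 [h]
    exact add_neg_cancel _
  exact (smul_eq_zero.1 h2).resolve_left two_ne_zero

theorem Derivation.lie_toLinearMap_mulLeft {R A : Type*} [CommRing R] [CommRing A] [Algebra R A]
    (D : Derivation R A A) (z : A) :
    ⁅(D : Module.End R A), LinearMap.mulLeft R z⁆ = LinearMap.mulLeft R (D z) := by
  ext F
  simp [Ring.lie_def, D.leibniz, mul_comm]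

namespace Ring

variable {A : Type*} [Ring A]

theorem lie_mul_right (a b c : A) : ⁅a, b * c⁆ = ⁅a, b⁆ * c + b * ⁅a, c⁆ := by
  simp only [lie_def]
  noncomm_ring

theorem lie_neg_right (a b : A) : ⁅a, -b⁆ = -⁅a, b⁆ := by
  simp only [lie_def, mul_neg, neg_mul, sub_neg_eq_add, neg_sub, neg_add_eq_sub]

theorem lie_sum_right {ι : Type*} (a : A) (s : Finset ι) (f : ι → A) :
    ⁅a, ∑ i ∈ s, f i⁆ = ∑ i ∈ s, ⁅a, f i⁆ := by
  simp only [lie_def, Finset.mul_sum, Finset.sum_mul, Finset.sum_sub_distrib]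

end Ring

theorem Module.End.lie_smul_right {R M : Type*} [CommSemiring R] [AddCommGroup M] [Module R M]
    (a b : Module.End R M) (r : R) : ⁅a, r • b⁆ = r • ⁅a, b⁆ :=
  LinearMap.ext fun x => by simp [Ring.lie_def, smul_sub]

namespace Module.End

variable {R M : Type*} [CommRing R] [AddCommGroup M] [Module R M]

theorem lie_sub_add_mul_sub_one (t : R) {z n q d b : Module.End R M} (hz : ⁅b, z⁆ = t • d)
    (hn : ⁅b, n⁆ = t • b) (hq : Commute q b) (hd : Commute d b) :
    ⁅z - (n + q) * d, b - 1⁆ = t • (d * (b - 1)) := by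
  have e : ⁅z - (n + q) * d, b - 1⁆ = -⁅b, z⁆ + ⁅b, n⁆ * d + ⁅b, q⁆ * d + (n + q) * ⁅b, d⁆ := by
    simp only [Ring.lie_def]
    noncomm_ring
  rw [e, hz, hn, hq.symm.lie_eq, hd.symm.lie_eq, smul_mul_assoc, mul_sub, hd.eq, mul_one,
    smul_sub, mul_zero, zero_mul, add_zero]
  abel

theorem apply_eq_zero_of_lie_eq_mul {f g d : Module.End R M} (h : ⁅f, g⁆ = d * g) {x : M}
    (hx : g x = 0) : g (f x) = 0 := by
  simpa [Ring.lie_def, hx] using LinearMap.congr_fun h x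

theorem apply_eq_smul_of_commute {f g : Module.End R M} (h : Commute f g) {x : M} {c : R}
    (hx : g x = c • x) : g (f x) = c • f x := by
  rw [← mul_apply, ← h.eq, mul_apply, hx, map_smul]

end Module.End

section TwistedLike

variable (V : Fin 3 → ℝ)

def projPerp (A B : Fin 3) : ℝ := (if A = B then eta A else 0) - V A * V B

theorem eps_swap (A B C : Fin 3) : eps B A C = -eps A B C := by
  unfold eps; ring

theorem VdotD_eq_dirDeriv : VdotD V = dirDeriv V :=
  LinearMap.ext fun F => by simp [VdotD, Dop, dirDeriv_apply]

theorem Dperp_apply (A : Fin 3) (F : P3) : Dperp V A F = dirDeriv (projPerp V A) F := by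
  simp [Dperp, Dop, VdotD, dirDeriv_apply, projPerp, sub_smul, Finset.sum_sub_distrib, ite_smul,
    Finset.smul_sum, smul_smul]

theorem Dperp_eq_dirDeriv (A : Fin 3) : Dperp V A = dirDeriv (projPerp V A) :=
  LinearMap.ext (Dperp_apply V A)

theorem dirDeriv_ZdotV (w : Fin 3 → ℝ) :
    dirDeriv w (ZdotV V) = C (∑ A, eta A * V A * w A) := by
  simp [ZdotV, Derivation.leibniz, dirDeriv_X, derivation_C]

theorem dirDeriv_Zperp (w : Fin 3 → ℝ) (B : Fin 3) :
    dirDeriv w (Zperp V B) = C (w B - V B * ∑ A, eta A * V A * w A) := by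
  simp [Zperp, Derivation.leibniz, dirDeriv_X, derivation_C, dirDeriv_ZdotV]

theorem sum_eta_mul_projPerp (hV : ∑ A : Fin 3, eta A * V A * V A = 1) (A : Fin 3) :
    ∑ B, eta B * V B * projPerp V A B = 0 := by
  fin_cases A <;> simp [Fin.sum_univ_three, projPerp, eta] at hV ⊢ <;> grind

theorem sum_eta_mul_projPerp_mul_projPerp (hV : ∑ A : Fin 3, eta A * V A * V A = 1)
    (A B : Fin 3) : ∑ C, eta C * projPerp V C A * projPerp V C B = projPerp V A B := by
  fin_cases A <;> fin_cases B <;> simp [Fin.sum_univ_three, projPerp, eta] at hV ⊢ <;> grind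

theorem Dperp_Zperp (hV : ∑ A : Fin 3, eta A * V A * V A = 1) (A B : Fin 3) :
    Dperp V A (Zperp V B) = C (projPerp V A B) := by
  rw [Dperp_apply, dirDeriv_Zperp, sum_eta_mul_projPerp V hV, mul_zero, sub_zero]

theorem sum_eta_smul_Dperp (hV : ∑ A : Fin 3, eta A * V A * V A = 1) (A : Fin 3) (F : P3) :
    ∑ C, (eta C * projPerp V C A) • Dperp V C F = Dperp V A F := by
  simp only [Dperp_apply, dirDeriv_apply, Finset.smul_sum, smul_smul]
  rw [Finset.sum_comm]
  refine Finset.sum_congr rfl fun B _ => ?_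
  rw [← Finset.sum_smul, sum_eta_mul_projPerp_mul_projPerp V hV]

theorem Dperp_mul (A : Fin 3) (p q : P3) :
    Dperp V A (p * q) = p * Dperp V A q + Dperp V A p * q := by
  simp only [Dperp_apply, Derivation.leibniz, smul_eq_mul]
  ring

theorem Dperp_C (A : Fin 3) (r : ℝ) : Dperp V A (C r) = 0 := by
  rw [Dperp_apply, derivation_C]

theorem Boxperp_apply (F : P3) : Boxperp V F = ∑ C, eta C • Dperp V C (Dperp V C F) := by
  simp [Boxperp]

theorem Dperp_Dperp_Zperp_mul (hV : ∑ A : Fin 3, eta A * V A * V A = 1) (A B : Fin 3) (F : P3) :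
    Dperp V B (Dperp V B (Zperp V A * F)) =
      Zperp V A * Dperp V B (Dperp V B F) + (2 * projPerp V B A) • Dperp V B F := by
  simp only [Dperp_mul, map_add, Dperp_Zperp V hV, Dperp_C, zero_mul, add_zero, smul_eq_C_mul,
    C_mul, map_ofNat]
  ring

theorem Boxperp_Zperp_mul (hV : ∑ A : Fin 3, eta A * V A * V A = 1) (A : Fin 3) (F : P3) :
    Boxperp V (Zperp V A * F) = Zperp V A * Boxperp V F + (2 : ℝ) • Dperp V A F := by
  rw [Boxperp_apply, Boxperp_apply, ← sum_eta_smul_Dperp V hV A F]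
  simp only [Dperp_Dperp_Zperp_mul V hV, smul_add, Finset.sum_add_distrib, Finset.mul_sum,
    mul_smul_comm, Finset.smul_sum, smul_smul, mul_left_comm (2 : ℝ)]

theorem commute_Dperp (A B : Fin 3) : Commute (Dperp V A) (Dperp V B) := by
  rw [Dperp_eq_dirDeriv, Dperp_eq_dirDeriv]
  exact commute_dirDeriv _ _

theorem commute_Dperp_VdotD (A : Fin 3) : Commute (Dperp V A) (VdotD V) := by
  rw [Dperp_eq_dirDeriv, VdotD_eq_dirDeriv]
  exact commute_dirDeriv _ _

theorem commute_Dperp_Boxperp (A : Fin 3) : Commute (Dperp V A) (Boxperp V) :=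
  Commute.sum_right _ _ _ fun B _ =>
    ((commute_Dperp V A B).mul_right (commute_Dperp V A B)).smul_right _

theorem commute_Dperp_mulLeft_ZdotV (hV : ∑ A : Fin 3, eta A * V A * V A = 1) (A : Fin 3) :
    Commute (Dperp V A) (LinearMap.mulLeft ℝ (ZdotV V)) := by
  rw [commute_iff_lie_eq, Dperp_eq_dirDeriv, Derivation.lie_toLinearMap_mulLeft,
    dirDeriv_ZdotV, sum_eta_mul_projPerp V hV, map_zero, LinearMap.mulLeft_zero_eq_zero]

theorem commute_VdotD_mulLeft_Zperp (hV : ∑ A : Fin 3, eta A * V A * V A = 1) (A : Fin 3) :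
    Commute (VdotD V) (LinearMap.mulLeft ℝ (Zperp V A)) := by
  rw [commute_iff_lie_eq, VdotD_eq_dirDeriv, Derivation.lie_toLinearMap_mulLeft, dirDeriv_Zperp,
    hV, mul_one, sub_self, map_zero, LinearMap.mulLeft_zero_eq_zero]

theorem Npar_eq (hV : ∑ A : Fin 3, eta A * V A * V A = 1) :
    Npar V = LinearMap.mulLeft ℝ (ZdotV V) * VdotD V := by
  refine LinearMap.ext fun F => ?_
  simp only [Npar, Zpar, Dpar, C_mul', LinearMap.coe_sum, LinearMap.coe_smul, LinearMap.coe_comp,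
    Finset.sum_apply, Pi.smul_apply, Function.comp_apply, map_smul, LinearMap.mulLeft_apply,
    Algebra.smul_mul_assoc, smul_smul, Module.End.mul_apply]
  simp only [← mul_assoc, ← Finset.sum_smul, hV, one_smul]

theorem commute_Npar_Dperp (hV : ∑ A : Fin 3, eta A * V A * V A = 1) (A : Fin 3) :
    Commute (Npar V) (Dperp V A) := by
  rw [Npar_eq V hV]
  exact ((commute_Dperp_mulLeft_ZdotV V hV A).mul_right (commute_Dperp_VdotD V A)).symm

theorem commute_Npar_mulLeft_Zperp (hV : ∑ A : Fin 3, eta A * V A * V A = 1) (A : Fin 3) :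
    Commute (Npar V) (LinearMap.mulLeft ℝ (Zperp V A)) := by
  have hZ : Commute (LinearMap.mulLeft ℝ (ZdotV V)) (LinearMap.mulLeft ℝ (Zperp V A)) :=
    LinearMap.ext fun F => mul_left_comm _ _ _
  rw [Npar_eq V hV]
  exact hZ.mul_left (commute_VdotD_mulLeft_Zperp V hV A)

theorem commute_Npar_Nperp (hV : ∑ A : Fin 3, eta A * V A * V A = 1) :
    Commute (Npar V) (Nperp V) :=
  Commute.sum_right _ _ _ fun A _ =>
    ((commute_Npar_mulLeft_Zperp V hV A).mul_right (commute_Npar_Dperp V hV A)).smul_right _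

theorem commute_Npar_Boxperp (hV : ∑ A : Fin 3, eta A * V A * V A = 1) :
    Commute (Npar V) (Boxperp V) :=
  Commute.sum_right _ _ _ fun A _ =>
    ((commute_Npar_Dperp V hV A).mul_right (commute_Npar_Dperp V hV A)).smul_right _

theorem commute_Npar_Lgen (hV : ∑ A : Fin 3, eta A * V A * V A = 1) :
    Commute (Npar V) (Lgen V) :=
  Commute.neg_right <| Commute.sum_right _ _ _ fun A _ => Commute.sum_right _ _ _ fun B _ =>
    Commute.sum_right _ _ _ fun _ _ =>
      ((commute_Npar_mulLeft_Zperp V hV A).mul_right (commute_Npar_Dperp V hV B)).smul_right _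

theorem commute_Npar_Pgen (hV : ∑ A : Fin 3, eta A * V A * V A = 1) (Δ : Polynomial ℝ)
    (A : Fin 3) : Commute (Npar V) (Pgen V Δ A) := by
  have hΔ : Commute (Npar V) (Polynomial.aeval (Npar V) Δ) :=
    Algebra.commute_of_mem_adjoin_self (Polynomial.aeval_mem_adjoin_singleton ℝ _)
  exact (commute_Npar_mulLeft_Zperp V hV A).sub_right
    (((commute_Npar_Nperp V hV).add_right hΔ).mul_right (commute_Npar_Dperp V hV A))

theorem lie_Boxperp_mulLeft_Zperp (hV : ∑ A : Fin 3, eta A * V A * V A = 1) (A : Fin 3) :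
    ⁅Boxperp V, LinearMap.mulLeft ℝ (Zperp V A)⁆ = (2 : ℝ) • Dperp V A :=
  LinearMap.ext fun F => by
    simp [Ring.lie_def, Boxperp_Zperp_mul V hV]

theorem lie_Boxperp_Zperp_mul_Dperp (hV : ∑ A : Fin 3, eta A * V A * V A = 1) (A B : Fin 3) :
    ⁅Boxperp V, LinearMap.mulLeft ℝ (Zperp V A) * Dperp V B⁆ =
      (2 : ℝ) • (Dperp V A * Dperp V B) := by
  rw [Ring.lie_mul_right, lie_Boxperp_mulLeft_Zperp V hV,
    commute_iff_lie_eq.1 (commute_Dperp_Boxperp V B).symm, mul_zero, add_zero, smul_mul_assoc]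

theorem lie_Boxperp_Nperp (hV : ∑ A : Fin 3, eta A * V A * V A = 1) :
    ⁅Boxperp V, Nperp V⁆ = (2 : ℝ) • Boxperp V := by
  rw [Nperp, Ring.lie_sum_right]
  simp only [Module.End.lie_smul_right, ← Module.End.mul_eq_comp, lie_Boxperp_Zperp_mul_Dperp V hV,
    smul_comm _ (2 : ℝ)]
  rw [← Finset.smul_sum, Boxperp]
  rfl

theorem lie_Boxperp_Lgen (hV : ∑ A : Fin 3, eta A * V A * V A = 1) :
    ⁅Boxperp V, Lgen V⁆ = 0 := by
  simp only [Lgen, Ring.lie_neg_right, Ring.lie_sum_right, Module.End.lie_smul_right,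
    ← Module.End.mul_eq_comp, lie_Boxperp_Zperp_mul_Dperp V hV, neg_eq_zero]
  refine Finset.sum_sum_eq_zero_of_antisymm (K := ℝ) fun A B => ?_
  rw [← Finset.sum_neg_distrib]
  refine Finset.sum_congr rfl fun C _ => ?_
  rw [eps_swap, neg_mul, (commute_Dperp V B A).eq]
  exact neg_smul (M := Module.End ℝ P3) _ _

end TwistedLike

/-- The twisted-like generators `𝕃` and `ℙ^A` commute with `N_∥`; `𝕃` commutes with
`□_⊥ - 1`, and `[ℙ^A, □_⊥ - 1] = 2 ∂_⊥^A (□_⊥ - 1)`. Consequently the kernel of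
`□_⊥ - 1` intersected with an eigenspace of `N_∥` is invariant under `𝕃` and all `ℙ^A`. -/
theorem twisted_like_invariance (V : Fin 3 → ℝ)
    (hV : ∑ A : Fin 3, eta A * V A * V A = 1) (Δ : Polynomial ℝ) :
    (Lgen V ∘ₗ Npar V = Npar V ∘ₗ Lgen V) ∧
    (∀ A : Fin 3, Pgen V Δ A ∘ₗ Npar V = Npar V ∘ₗ Pgen V Δ A) ∧
    (Lgen V ∘ₗ (Boxperp V - LinearMap.id) = (Boxperp V - LinearMap.id) ∘ₗ Lgen V) ∧
    (∀ A : Fin 3,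
      Pgen V Δ A ∘ₗ (Boxperp V - LinearMap.id) - (Boxperp V - LinearMap.id) ∘ₗ Pgen V Δ A =
        (2 : ℝ) • (Dperp V A ∘ₗ (Boxperp V - LinearMap.id))) ∧
    (∀ (n : ℝ) (F : P3), Boxperp V F - F = 0 → Npar V F = n • F →
      (Boxperp V (Lgen V F) - Lgen V F = 0 ∧ Npar V (Lgen V F) = n • Lgen V F ∧
        ∀ A : Fin 3, Boxperp V (Pgen V Δ A F) - Pgen V Δ A F = 0 ∧
          Npar V (Pgen V Δ A F) = n • Pgen V Δ A F)) := by
  have hL := commute_Npar_Lgen V hV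
  have hP := commute_Npar_Pgen V hV Δ
  have hLB : Commute (Lgen V) (Boxperp V - 1) :=
    (commute_iff_lie_eq.2 (lie_Boxperp_Lgen V hV)).symm.sub_right (Commute.one_right _)
  have hΔB : Commute (Polynomial.aeval (Npar V) Δ) (Boxperp V) :=
    (Algebra.commute_of_mem_adjoin_singleton_of_commute
      (Polynomial.aeval_mem_adjoin_singleton ℝ _) (commute_Npar_Boxperp V hV).symm).symm
  have hPB (A : Fin 3) : ⁅Pgen V Δ A, Boxperp V - 1⁆ = (2 : ℝ) • (Dperp V A * (Boxperp V - 1)) :=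
    Module.End.lie_sub_add_mul_sub_one 2 (lie_Boxperp_mulLeft_Zperp V hV A)
      (lie_Boxperp_Nperp V hV) hΔB (commute_Dperp_Boxperp V A)
  refine ⟨hL.eq.symm, fun A => (hP A).eq.symm, hLB.eq, hPB, fun n F hBox hNpar => ?_⟩
  refine ⟨Module.End.apply_eq_zero_of_lie_eq_mul (d := 0) (by rw [hLB.lie_eq, zero_mul]) hBox,
    Module.End.apply_eq_smul_of_commute hL.symm hNpar, fun A => ⟨?_,
    Module.End.apply_eq_smul_of_commute (hP A).symm hNpar⟩⟩
  exact Module.End.apply_eq_zero_of_lie_eq_mul ((hPB A).trans (smul_mul_assoc _ _ _).symm) hBox
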